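/- For every natural number n, the side and diameter numbers p n and q n are relatively prime, i.e. Nat.Coprime (p n) (q n). -/
import Mathlib


mutual
/-- The Pythagorean side numbers. -/
def p : ℕ → ℕ
  | 0 => 1
  | n + 1 => p n + q n
/-- The Pythagorean diameter numbers. -/
def q : ℕ → ℕ
  | 0 => 1
  | n + 1 => 2 * p n + q n
end

/-- The side and diameter numbers are relatively prime. -/
theorem coprime_side_diameter (n : ℕ) : Nat.Coprime (p n) (q n) := by
  induction n with
  | zero => decide
  | succ n ih =>
    show Nat.Coprime (p n + q n) (2 * p n + q n)
    have h : 2 * p n + q n = p n + (p n + q n) := by ring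
    rw [Nat.Coprime, h, Nat.gcd_add_self_right, Nat.gcd_comm, Nat.add_comm (p n), Nat.gcd_add_self_right]
    exact ih
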